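/- Let (X, 𝒜) be a measurable space, μ a probability measure on X, and φ : X → X a measurable bijection with measurable inverse ψ such that the pushforward φ_*μ is absolutely continuous with respect to μ, with density D = d(φ_*μ)/dμ. Let ν be the measure on X with density (1/2)·min(D, 1) with respect to μ, let P₁ be the pushforward of ν under the map w ↦ (ψ(w), w) from X to X × X, let S : X × X → X × X be the swap map S(w₁,w₂) = (w₂,w₁), let P̃₁ = P₁ + S_*P₁, let Δ : X → X × X be the diagonal map Δ(w) = (w,w), let Π₁, Π₂ : X × X → X be the coordinate projections, and set P₂ = S_*P₁ + Δ_*(μ − (Π₁)_*P̃₁), where μ − (Π₁)_*P̃₁ is a nonnegative measure. Then both marginals of P₁ + P₂ are equal to μ, i.e. (Π₁)_*(P₁ + P₂) = μ and (Π₂)_*(P₁ + P₂) = μ. -/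

import Mathlib

/-!
`P₁ + S_*P₁` is swap-symmetric, so its two marginals agree, and both equal `ψ_*ν + ν`. Since
`ν ≤ μ/2` and `ν ≤ (φ_*μ)/2` (the density `½ min(D, 1)` is below both `½` and `½ D`), pushing the
second bound forward by `ψ` (with `ψ ∘ φ = id`) gives `ψ_*ν + ν ≤ μ`. Adding the diagonal copy of the defect
`μ − (ψ_*ν + ν)` then restores `μ` in either coordinate.
-/

open MeasureTheory Measure ENNReal

namespace MeasureTheory.Measure

variable {X Y : Type*} [MeasurableSpace X] [MeasurableSpace Y]

lemma snd_add_map_swap_self (ρ : Measure (X × X)) :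
    (ρ + ρ.map Prod.swap).snd = (ρ + ρ.map Prod.swap).fst := by
  rw [snd_add, fst_add, snd_map_swap, fst_map_swap, add_comm]

lemma fst_map_diag (m : Measure X) : (m.map fun w => (w, w)).fst = m := by
  rw [fst_map_prodMk (Y := fun w => w) measurable_id, map_id']

lemma snd_map_diag (m : Measure X) : (m.map fun w => (w, w)).snd = m := by
  rw [snd_map_prodMk (X := fun w => w) measurable_id, map_id']

lemma fst_add_map_diag_sub {μ : Measure X} [IsFiniteMeasure μ] {Q : Measure (X × X)}
    (hQ : Q.fst ≤ μ) : (Q + (μ - Q.fst).map fun w => (w, w)).fst = μ := by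
  have : IsFiniteMeasure Q.fst := isFiniteMeasure_of_le μ hQ
  rw [fst_add, fst_map_diag, add_comm, sub_add_cancel_of_le hQ]

lemma snd_add_map_diag_sub {μ : Measure X} [IsFiniteMeasure μ] {Q : Measure (X × X)}
    (hQ : Q.fst ≤ μ) (hsymm : Q.snd = Q.fst) :
    (Q + (μ - Q.fst).map fun w => (w, w)).snd = μ := by
  have : IsFiniteMeasure Q.fst := isFiniteMeasure_of_le μ hQ
  rw [snd_add, snd_map_diag, hsymm, add_comm, sub_add_cancel_of_le hQ]

lemma withDensity_const_mul_min_one_le_smul (μ : Measure X) (c : ℝ≥0∞) (f : X → ℝ≥0∞) :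
    μ.withDensity (fun w => c * min (f w) 1) ≤ c • μ := by
  rw [← withDensity_const]
  exact withDensity_mono (ae_of_all _ fun w => mul_le_of_le_one_right' (min_le_right _ _))

lemma withDensity_const_mul_min_rnDeriv_le_smul {μ ρ : Measure X}
    [ρ.HaveLebesgueDecomposition μ] (hac : ρ ≪ μ) (c : ℝ≥0∞) :
    μ.withDensity (fun w => c * min (ρ.rnDeriv μ w) 1) ≤ c • ρ := by
  calc μ.withDensity (fun w => c * min (ρ.rnDeriv μ w) 1)
      ≤ μ.withDensity (c • ρ.rnDeriv μ) :=
        withDensity_mono (ae_of_all _ fun w => mul_le_mul_right (min_le_left _ _) c)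
    _ = c • ρ := by
        rw [withDensity_smul _ (measurable_rnDeriv ρ μ), withDensity_rnDeriv_eq ρ μ hac]

lemma map_le_smul_of_le_smul_map {μ : Measure X} {ν : Measure Y} {φ : X → Y} {ψ : Y → X}
    {c : ℝ≥0∞} (hφ : Measurable φ) (hψ : Measurable ψ) (hlr : Function.LeftInverse ψ φ)
    (h : ν ≤ c • μ.map φ) : ν.map ψ ≤ c • μ := by
  calc ν.map ψ ≤ (c • μ.map φ).map ψ := map_mono h hψ
    _ = c • μ := by rw [Measure.map_smul, map_map hψ hφ, hlr.comp_eq_id, map_id]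

end MeasureTheory.Measure

theorem statement9_general {X : Type*} [MeasurableSpace X] (μ : Measure X) [IsProbabilityMeasure μ]
    (φ ψ : X → X) (hφ : Measurable φ) (hψ : Measurable ψ)
    (hlr : Function.LeftInverse ψ φ)
    (hac : μ.map φ ≪ μ)
    (D : X → ENNReal) (hD : D = (μ.map φ).rnDeriv μ)
    (ν : Measure X) (hν : ν = μ.withDensity fun w => (1 / 2 : ENNReal) * min (D w) 1)
    (P₁ : Measure (X × X)) (hP₁ : P₁ = ν.map fun w => (ψ w, w))
    (Pt : Measure (X × X)) (hPt : Pt = P₁ + P₁.map Prod.swap)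
    (P₂ : Measure (X × X))
    (hP₂ : P₂ = P₁.map Prod.swap + (μ - Pt.map Prod.fst).map fun w => (w, w)) :
    (P₁ + P₂).map Prod.fst = μ ∧ (P₁ + P₂).map Prod.snd = μ := by
  have hν_le : ν ≤ (1 / 2 : ℝ≥0∞) • μ := hν ▸ withDensity_const_mul_min_one_le_smul μ _ D
  have hνψ_le : ν.map ψ ≤ (1 / 2 : ℝ≥0∞) • μ :=
    map_le_smul_of_le_smul_map hφ hψ hlr
      (hν ▸ hD ▸ withDensity_const_mul_min_rnDeriv_le_smul hac _)
  have hPt_fst : Pt.fst ≤ μ :=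
    calc Pt.fst = ν.map ψ + ν := by
          rw [hPt, fst_add, fst_map_swap, hP₁, fst_map_prodMk (Y := fun w => w) measurable_id,
            snd_map_prodMk hψ, map_id']
      _ ≤ (1 / 2 : ℝ≥0∞) • μ + (1 / 2 : ℝ≥0∞) • μ := add_le_add hνψ_le hν_le
      _ = μ := by rw [← add_smul, ENNReal.add_halves, one_smul]
  have hPt_symm : Pt.snd = Pt.fst := by rw [hPt, snd_add_map_swap_self]
  have hsum : P₁ + P₂ = Pt + (μ - Pt.fst).map fun w => (w, w) := by
    rw [hP₂, hPt, add_assoc]; rfl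
  rw [hsum]
  exact ⟨fst_add_map_diag_sub hPt_fst, snd_add_map_diag_sub hPt_fst hPt_symm⟩

/-- In the setting of Statement 8, with moreover `Δ` the diagonal map and
`P₂ = S_*P₁ + Δ_*(μ − (Π₁)_*P̃₁)`, both marginals of `P₁ + P₂` equal `μ`. -/
theorem statement9 {X : Type*} [MeasurableSpace X] (μ : Measure X) [IsProbabilityMeasure μ]
    (φ ψ : X → X) (hφ : Measurable φ) (hψ : Measurable ψ)
    (hlr : Function.LeftInverse ψ φ) (hrl : Function.RightInverse ψ φ)
    (hac : μ.map φ ≪ μ)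
    (D : X → ENNReal) (hD : D = (μ.map φ).rnDeriv μ)
    (ν : Measure X) (hν : ν = μ.withDensity fun w => (1 / 2 : ENNReal) * min (D w) 1)
    (P₁ : Measure (X × X)) (hP₁ : P₁ = ν.map fun w => (ψ w, w))
    (Pt : Measure (X × X)) (hPt : Pt = P₁ + P₁.map Prod.swap)
    (P₂ : Measure (X × X))
    (hP₂ : P₂ = P₁.map Prod.swap + (μ - Pt.map Prod.fst).map fun w => (w, w)) :
    (P₁ + P₂).map Prod.fst = μ ∧ (P₁ + P₂).map Prod.snd = μ :=
  statement9_general μ φ ψ hφ hψ hlr hac D hD ν hν P₁ hP₁ Pt hPt P₂ hP₂
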